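/- arXiv:1910.06482 — 3 statements merged into one kernel-verified Lean document; each statement's English description precedes it below -/
import Mathlib

section
/- Let χ : ℝ² → ℝ be continuous, 1-periodic in the first variable, with ∫₀¹ χ(y₁, y₂) dy₁ = χ̄ independent of y₂, and suppose ‖χ(·, 0) − χ̄‖_∞ ≤ C on [0,1]. Let g : ℝ → ℝ be C² with |g''| ≤ M₂ on [z, z+ε]. Then |∫_z^{z+ε} g(s) (χ(s/ε, 0) − χ̄) ds| ≤ (C |g'(z)| / 2) ε² + (C M₂ / 6) ε³. -/
/-- Oscillation–cancellation estimate: if `χ(·,0) − χ̄` is `1`-periodic with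
zero mean and bounded by `C`, and `g` is `C²` with `|g''| ≤ M₂` on `[z, z+ε]`,
then `|∫_z^{z+ε} g(s)(χ(s/ε,0) − χ̄) ds| ≤ (C|g'(z)|/2) ε² + (C M₂/6) ε³`. -/
theorem stmt_4 (χ : ℝ → ℝ → ℝ) (χbar C : ℝ)
    (hcont : Continuous (fun p : ℝ × ℝ => χ p.1 p.2))
    (hper : ∀ y₁ y₂, χ (y₁ + 1) y₂ = χ y₁ y₂)
    (havg : ∀ y₂, (∫ y₁ in (0:ℝ)..1, χ y₁ y₂) = χbar)
    (hbound : ∀ y₁ ∈ Set.Icc (0:ℝ) 1, |χ y₁ 0 - χbar| ≤ C)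
    (g : ℝ → ℝ) (z ε M₂ : ℝ) (hε : 0 < ε)
    (hg : ContDiff ℝ 2 g)
    (hg'' : ∀ s ∈ Set.Icc z (z + ε), |deriv (deriv g) s| ≤ M₂) :
    |∫ s in z..(z + ε), g s * (χ (s / ε) 0 - χbar)|
      ≤ C * |deriv g z| / 2 * ε ^ 2 + C * M₂ / 6 * ε ^ 3 := by
  set f : ℝ → ℝ := fun y => χ y 0 - χbar with hf_def
  have hf_cont : Continuous f := by
    have : Continuous fun y : ℝ => χ y 0 :=
      hcont.comp (continuous_id.prodMk continuous_const)
    exact this.sub continuous_const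
  have hf_per : Function.Periodic f 1 := by
    intro y; simp [hf_def, hper]
  have hf_bd : ∀ y : ℝ, |f y| ≤ C := by
    intro y
    have h1 : f (Int.fract y) = f y := by
      have := hf_per.sub_int_mul_eq (x := y) ⌊y⌋
      rw [mul_one] at this
      rw [Int.fract]
      exact this
    rw [← h1]
    exact hbound _ ⟨(Int.fract_nonneg y), le_of_lt (Int.fract_lt_one y)⟩
  have hC : 0 ≤ C := le_trans (abs_nonneg _) (hbound 0 ⟨le_refl _, zero_le_one⟩)
  have hM₂ : 0 ≤ M₂ := le_trans (abs_nonneg _) (hg'' z ⟨le_refl _, by linarith⟩)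
  have hab : z ≤ z + ε := by linarith
  -- zero mean
  have hf_mean : (∫ y in (0:ℝ)..1, f y) = 0 := by
    have hint : IntervalIntegrable (fun y => χ y 0) MeasureTheory.volume 0 1 :=
      (hcont.comp (continuous_id.prodMk continuous_const)).intervalIntegrable 0 1
    rw [hf_def]
    rw [intervalIntegral.integral_sub hint (intervalIntegrable_const)]
    simp [havg 0]
  have hzero : (∫ s in z..(z + ε), f (s / ε)) = 0 := by
    rw [intervalIntegral.integral_comp_div (c := ε) f (ne_of_gt hε)]
    have : (z + ε) / ε = z / ε + 1 := by field_simp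
    rw [this, hf_per.intervalIntegral_add_eq (z / ε) 0]
    simp [hf_mean]
  -- derivative facts
  have hg1 : Differentiable ℝ g := hg.differentiable (by norm_num)
  have hgd : ContDiff ℝ 1 (deriv g) := by
    have := (contDiff_succ_iff_deriv (n := 1)).mp (by exact_mod_cast hg)
    exact this.2.2
  have hgd1 : Differentiable ℝ (deriv g) := hgd.differentiable one_ne_zero
  have hgdd_cont : Continuous (deriv (deriv g)) := by
    have := (contDiff_succ_iff_deriv (n := 0)).mp hgd
    exact (this.2.2).continuous
  have hgd_cont : Continuous (deriv g) := hgd.continuous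
  -- step 1: |deriv g s - deriv g z| ≤ M₂ (s - z) on [z, z+ε]
  have hstep1 : ∀ s ∈ Set.Icc z (z + ε), |deriv g s - deriv g z| ≤ M₂ * (s - z) := by
    intro s hs
    have hFTC : deriv g s - deriv g z = ∫ t in z..s, deriv (deriv g) t := by
      rw [intervalIntegral.integral_deriv_eq_sub (fun t _ => hgd1 t)
        (hgdd_cont.intervalIntegrable z s)]
    rw [hFTC]
    rw [← Real.norm_eq_abs]
    have := intervalIntegral.norm_integral_le_of_norm_le_const
      (C := M₂) (a := z) (b := s) (f := deriv (deriv g)) ?_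
    · calc _ ≤ M₂ * |s - z| := this
        _ = M₂ * (s - z) := by rw [abs_of_nonneg (by linarith [hs.1])]
    · intro t ht
      rw [Set.uIoc_of_le hs.1] at ht
      exact hg'' t ⟨le_of_lt ht.1, le_trans ht.2 hs.2⟩
  -- step 2: Taylor remainder bound
  set R : ℝ → ℝ := fun s => g s - g z - deriv g z * (s - z) with hR_def
  have hR_deriv : ∀ t : ℝ, HasDerivAt R (deriv g t - deriv g z) t := by
    intro t
    have h1 : HasDerivAt g (deriv g t) t := (hg1 t).hasDerivAt
    have h2 : HasDerivAt (fun s => deriv g z * (s - z)) (deriv g z) t := by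
      simpa using (((hasDerivAt_id t).sub_const z).const_mul (deriv g z))
    exact (h1.sub_const (g z)).sub h2
  have hstep2 : ∀ s ∈ Set.Icc z (z + ε), |R s| ≤ M₂ / 2 * (s - z) ^ 2 := by
    intro s hs
    have hFTC : R s = ∫ t in z..s, (deriv g t - deriv g z) := by
      have : R s - R z = ∫ t in z..s, (deriv g t - deriv g z) := by
        rw [← intervalIntegral.integral_deriv_eq_sub (fun t _ => (hR_deriv t).differentiableAt)]
        · congr 1; funext t; exact (hR_deriv t).deriv
        · have : Continuous fun t => deriv g t - deriv g z := hgd_cont.sub continuous_const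
          have heq : deriv R = fun t => deriv g t - deriv g z := by
            funext t; exact (hR_deriv t).deriv
          rw [heq]; exact this.intervalIntegrable z s
      simpa [hR_def] using this
    rw [hFTC, ← Real.norm_eq_abs]
    have hb : ∀ t ∈ Set.Ioc z s, ‖deriv g t - deriv g z‖ ≤ M₂ * (t - z) := by
      intro t ht
      exact hstep1 t ⟨le_of_lt ht.1, le_trans ht.2 hs.2⟩
    have hval : (∫ t in z..s, M₂ * (t - z)) = M₂ / 2 * (s - z) ^ 2 := by
      rw [intervalIntegral.integral_const_mul]
      have : (∫ t in z..s, (t - z)) = (s - z) ^ 2 / 2 := by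
        rw [intervalIntegral.integral_comp_sub_right (fun t => t) z, integral_id]
        ring
      rw [this]; ring
    calc ‖∫ t in z..s, (deriv g t - deriv g z)‖
        ≤ |∫ t in z..s, M₂ * (t - z)| := by
          refine le_trans (intervalIntegral.norm_integral_le_of_norm_le
            (g := fun t => M₂ * (t - z)) hs.1 ?_ ?_) (le_abs_self _)
          · filter_upwards with t ht
            exact hb t ht
          · exact ((continuous_const.mul (continuous_id.sub continuous_const)).intervalIntegrable z s)
      _ = M₂ / 2 * (s - z) ^ 2 := by
          rw [hval]
          exact abs_of_nonneg (by nlinarith [hs.1])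
  -- split the integral
  have hφc : Continuous fun s => f (s / ε) :=
    hf_cont.comp (continuous_id.div_const ε)
  have hgc : Continuous g := hg.continuous
  have hint1 : IntervalIntegrable (fun s => f (s / ε)) MeasureTheory.volume z (z + ε) :=
    hφc.intervalIntegrable z (z + ε)
  have hint2 : IntervalIntegrable (fun s => (s - z) * f (s / ε)) MeasureTheory.volume z (z + ε) :=
    ((continuous_id.sub continuous_const).mul hφc).intervalIntegrable z (z + ε)
  have hRcont : Continuous R := (hgc.sub continuous_const).sub
    (continuous_const.mul (continuous_id.sub continuous_const))
  have hint3 : IntervalIntegrable (fun s => R s * f (s / ε)) MeasureTheory.volume z (z + ε) :=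
    (hRcont.mul hφc).intervalIntegrable z (z + ε)
  have hsplit : (∫ s in z..(z + ε), g s * f (s / ε))
      = deriv g z * (∫ s in z..(z + ε), (s - z) * f (s / ε))
        + ∫ s in z..(z + ε), R s * f (s / ε) := by
    rw [← intervalIntegral.integral_const_mul, ← intervalIntegral.integral_add
      (hint2.const_mul _) hint3]
    have : (∫ s in z..(z + ε), g s * f (s / ε))
        = (∫ s in z..(z + ε), (g z * f (s / ε)
            + (deriv g z * ((s - z) * f (s / ε)) + R s * f (s / ε)))) := by
      congr 1; funext s; simp [hR_def]; ring
    rw [this, intervalIntegral.integral_add (hint1.const_mul _)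
      ((hint2.const_mul _).add hint3), intervalIntegral.integral_const_mul, hzero]
    ring
  rw [hsplit]
  -- bound the two integrals
  have hbd2 : |∫ s in z..(z + ε), (s - z) * f (s / ε)| ≤ C * ε ^ 2 / 2 := by
    rw [← Real.norm_eq_abs]
    have hval : (∫ t in z..(z + ε), C * (t - z)) = C * ε ^ 2 / 2 := by
      rw [intervalIntegral.integral_const_mul]
      have : (∫ t in z..(z + ε), (t - z)) = ε ^ 2 / 2 := by
        rw [intervalIntegral.integral_comp_sub_right (fun t => t) z, integral_id]
        ring
      rw [this]; ring
    calc ‖∫ s in z..(z + ε), (s - z) * f (s / ε)‖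
        ≤ |∫ s in z..(z + ε), C * (s - z)| := by
          refine le_trans (intervalIntegral.norm_integral_le_of_norm_le (g := fun s => C * (s - z)) hab ?_ ?_) (le_abs_self _)
          · filter_upwards with t ht
            have h1 : |t - z| = t - z := abs_of_nonneg (by linarith [ht.1])
            calc ‖(t - z) * f (t / ε)‖ = |t - z| * |f (t / ε)| := abs_mul _ _
              _ ≤ |t - z| * C := by
                  exact mul_le_mul_of_nonneg_left (hf_bd _) (abs_nonneg _)
              _ = C * (t - z) := by rw [h1]; ring
          · exact (continuous_const.mul (continuous_id.sub continuous_const)).intervalIntegrable _ _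
      _ = C * ε ^ 2 / 2 := by
          rw [hval]
          exact abs_of_nonneg (by positivity)
  have hbd3 : |∫ s in z..(z + ε), R s * f (s / ε)| ≤ C * M₂ / 6 * ε ^ 3 := by
    rw [← Real.norm_eq_abs]
    have hval : (∫ t in z..(z + ε), C * (M₂ / 2) * (t - z) ^ 2) = C * M₂ / 6 * ε ^ 3 := by
      rw [intervalIntegral.integral_const_mul]
      have : (∫ t in z..(z + ε), (t - z) ^ 2) = ε ^ 3 / 3 := by
        rw [intervalIntegral.integral_comp_sub_right (fun t => t ^ 2) z, integral_pow]
        norm_num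
      rw [this]; ring
    calc ‖∫ s in z..(z + ε), R s * f (s / ε)‖
        ≤ |∫ s in z..(z + ε), C * (M₂ / 2) * (s - z) ^ 2| := by
          refine le_trans (intervalIntegral.norm_integral_le_of_norm_le
            (g := fun s => C * (M₂ / 2) * (s - z) ^ 2) hab ?_ ?_) (le_abs_self _)
          · filter_upwards with t ht
            calc ‖R t * f (t / ε)‖ = |R t| * |f (t / ε)| := abs_mul _ _
              _ ≤ (M₂ / 2 * (t - z) ^ 2) * C := by
                  apply mul_le_mul (hstep2 t ⟨le_of_lt ht.1, ht.2⟩) (hf_bd _)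
                    (abs_nonneg _)
                  positivity
              _ = C * (M₂ / 2) * (t - z) ^ 2 := by ring
          · exact (continuous_const.mul ((continuous_id.sub continuous_const).pow 2)).intervalIntegrable _ _
      _ = C * M₂ / 6 * ε ^ 3 := by
          rw [hval]
          exact abs_of_nonneg (by positivity)
  calc |deriv g z * (∫ s in z..(z + ε), (s - z) * f (s / ε))
        + ∫ s in z..(z + ε), R s * f (s / ε)|
      ≤ |deriv g z * (∫ s in z..(z + ε), (s - z) * f (s / ε))|
        + |∫ s in z..(z + ε), R s * f (s / ε)| := abs_add_le _ _
    _ ≤ |deriv g z| * (C * ε ^ 2 / 2) + C * M₂ / 6 * ε ^ 3 := by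
        rw [abs_mul]
        exact add_le_add (mul_le_mul_of_nonneg_left hbd2 (abs_nonneg _)) hbd3
    _ = C * |deriv g z| / 2 * ε ^ 2 + C * M₂ / 6 * ε ^ 3 := by ring
end

section
/- Under the Prandtl scaling assumption that |∂²ū₁/(∂x₂∂x₁)(z,0)| ≤ K ε^{-1/2} and |∂³ū₁/(∂x₂∂x₁²)| ≤ K ε^{-1/2} on [z, z+ε] × {0}, and with χ 1-periodic in y₁ with constant horizontal average χ̄ and sup_{y₁}|χ₁(y₁,0) − χ̄| ≤ C, the averaged local corrector u₁^{loc}(s, 0) = ε (∂ū₁/∂x₂)(s, 0)(χ₁(s/ε) − χ̄) satisfies |∫_z^{z+ε} u₁^{loc}(s, 0) ds| ≤ (CK/2) ε^{5/2} + (CK/6) ε^{7/2}; in particular it is O(ε^{5/2}). -/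
/-- HMM corrector cancellation: with `g(s) = (∂ū₁/∂x₂)(s,0)` satisfying the
Prandtl scale bounds `|g'(z)| ≤ K ε^{-1/2}` and `|g''| ≤ K ε^{-1/2}` on
`[z,z+ε]`, and `χ₁` `1`-periodic with constant average `χ̄` and
`sup_{y₁∈[0,1]}|χ₁(y₁,0) − χ̄| ≤ C`, the averaged local corrector
`u₁^{loc}(s,0) = ε g(s)(χ₁(s/ε,0) − χ̄)` satisfies
`|∫_z^{z+ε} u₁^{loc}| ≤ (CK/2) ε^{5/2} + (CK/6) ε^{7/2}`. -/
theorem stmt_5 (χ₁ : ℝ → ℝ → ℝ) (χbar C K : ℝ)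
    (hcont : Continuous (fun p : ℝ × ℝ => χ₁ p.1 p.2))
    (hper : ∀ y₁ y₂, χ₁ (y₁ + 1) y₂ = χ₁ y₁ y₂)
    (havg : ∀ y₂, (∫ y₁ in (0:ℝ)..1, χ₁ y₁ y₂) = χbar)
    (hbound : ∀ y₁ ∈ Set.Icc (0:ℝ) 1, |χ₁ y₁ 0 - χbar| ≤ C)
    (g : ℝ → ℝ) (z ε : ℝ) (hε : 0 < ε)
    (hg : ContDiff ℝ 2 g)
    (hg' : |deriv g z| ≤ K * ε ^ (-(1:ℝ)/2))
    (hg'' : ∀ s ∈ Set.Icc z (z + ε), |deriv (deriv g) s| ≤ K * ε ^ (-(1:ℝ)/2)) :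
    |∫ s in z..(z + ε), ε * g s * (χ₁ (s / ε) 0 - χbar)|
      ≤ C * K / 2 * ε ^ ((5:ℝ)/2) + C * K / 6 * ε ^ ((7:ℝ)/2) := by
  set δ : ℝ := K * ε ^ (-(1:ℝ)/2) with hδdef
  have hδ0 : 0 ≤ δ := le_trans (abs_nonneg _) hg'
  have hC0 : 0 ≤ C := le_trans (abs_nonneg _) (hbound 0 ⟨le_refl _, zero_le_one⟩)
  -- continuity facts
  have hχc : Continuous fun t : ℝ => χ₁ t 0 :=
    hcont.comp (continuous_id.prodMk continuous_const)
  have hfc : Continuous fun s : ℝ => χ₁ (s / ε) 0 - χbar :=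
    (hχc.comp (continuous_id.div_const ε)).sub continuous_const
  -- smoothness facts
  have h11 : ContDiff ℝ ((1 : WithTop ℕ∞) + 1) g := by
    convert hg using 2
    norm_num
  obtain ⟨hgd, -, hgd1⟩ := contDiff_succ_iff_deriv.mp h11
  have hdgd : Differentiable ℝ (deriv g) := hgd1.differentiable one_ne_zero
  have hdgc : Continuous (deriv g) := hdgd.continuous
  -- periodicity of the trace
  have P : Function.Periodic (fun t : ℝ => χ₁ t 0) 1 := fun t => hper t 0
  -- bound on the oscillation, for all reals
  have hχ : ∀ y : ℝ, |χ₁ y 0 - χbar| ≤ C := by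
    intro y
    have h1 : χ₁ (y - (⌊y⌋ : ℤ) • (1 : ℝ)) 0 = χ₁ y 0 := P.sub_zsmul_eq ⌊y⌋
    have h2 : y - (⌊y⌋ : ℤ) • (1 : ℝ) = Int.fract y := by
      rw [zsmul_eq_mul, mul_one, Int.self_sub_floor]
    rw [← h1, h2]
    exact hbound _ ⟨Int.fract_nonneg y, (Int.fract_lt_one y).le⟩
  -- the mean of the oscillation over one period vanishes
  have hint0 : (∫ s in z..(z + ε), (χ₁ (s / ε) 0 - χbar)) = 0 := by
    rw [intervalIntegral.integral_sub
      (Continuous.intervalIntegrable (by fun_prop) _ _)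
      (intervalIntegrable_const), intervalIntegral.integral_const]
    have h1 : (∫ s in z..(z + ε), χ₁ (s / ε) 0)
        = ε • ∫ t in z / ε..(z + ε) / ε, χ₁ t 0 := by
      exact intervalIntegral.integral_comp_div (fun t => χ₁ t 0) hε.ne'
    have h2 : (z + ε) / ε = z / ε + 1 := by field_simp
    have h3 : (∫ t in z / ε..(z / ε + 1), χ₁ t 0) = ∫ t in (0:ℝ)..(0 + 1), χ₁ t 0 :=
      P.intervalIntegral_add_eq (z / ε) 0
    rw [h1, h2, h3]
    simp only [zero_add, havg 0, smul_eq_mul, add_sub_cancel_left]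
    ring
  -- derivative bound on the interval
  have hg1 : ∀ t ∈ Set.Icc z (z + ε), |deriv g t| ≤ δ + δ * (t - z) := by
    intro t ht
    have hzm : z ∈ Set.Icc z (z + ε) := ⟨le_refl _, by linarith⟩
    have := Convex.norm_image_sub_le_of_norm_deriv_le
      (f := deriv g) (s := Set.Icc z (z + ε))
      (fun x _ => hdgd x) hg'' (convex_Icc _ _) hzm ht
    have habs : |deriv g t - deriv g z| ≤ δ * (t - z) := by
      simpa [Real.norm_eq_abs, abs_of_nonneg (by linarith [ht.1] : (0:ℝ) ≤ t - z)]
        using this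
    calc |deriv g t| ≤ |deriv g z| + |deriv g t - deriv g z| := by
          have := abs_sub_abs_le_abs_sub (deriv g t) (deriv g z)
          have := abs_add_le (deriv g z) (deriv g t - deriv g z)
          calc |deriv g t| = |deriv g z + (deriv g t - deriv g z)| := by ring_nf
            _ ≤ |deriv g z| + |deriv g t - deriv g z| := abs_add_le _ _
      _ ≤ δ + δ * (t - z) := add_le_add hg' habs
  -- increment bound via FTC
  have hgs : ∀ s ∈ Set.Icc z (z + ε), |g s - g z| ≤ δ * (s - z) + δ / 2 * (s - z) ^ 2 := by
    intro s hs
    have hzs : z ≤ s := hs.1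
    have hftc : (∫ t in z..s, deriv g t) = g s - g z :=
      intervalIntegral.integral_deriv_eq_sub (fun t _ => hgd t)
        (hdgc.intervalIntegrable _ _)
    rw [← hftc]
    have hmono : (∫ t in z..s, |deriv g t|) ≤ ∫ t in z..s, (δ + δ * (t - z)) := by
      apply intervalIntegral.integral_mono_on hzs
        (hdgc.abs.intervalIntegrable _ _)
        (Continuous.intervalIntegrable (by fun_prop) _ _)
      intro t ht
      exact hg1 t ⟨ht.1, le_trans ht.2 hs.2⟩
    have hcomp : (∫ t in z..s, (δ + δ * (t - z)))
        = δ * (s - z) + δ / 2 * (s - z) ^ 2 := by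
      have hlin : (∫ t in z..s, (t - z)) = (s - z) ^ 2 / 2 := by
        rw [intervalIntegral.integral_comp_sub_right (fun u => u) z, integral_id]
        ring
      rw [intervalIntegral.integral_add (intervalIntegrable_const)
        (Continuous.intervalIntegrable
          (by fun_prop : Continuous fun t : ℝ => δ * (t - z)) _ _),
        intervalIntegral.integral_const,
        intervalIntegral.integral_const_mul, hlin]
      simp only [smul_eq_mul]
      ring
    calc |∫ t in z..s, deriv g t| ≤ ∫ t in z..s, |deriv g t| :=
          intervalIntegral.abs_integral_le_integral_abs hzs
      _ ≤ δ * (s - z) + δ / 2 * (s - z) ^ 2 := le_trans hmono hcomp.le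
  -- split the main integral
  have hgc : Continuous g := hgd.continuous
  have hsplit : (∫ s in z..(z + ε), ε * g s * (χ₁ (s / ε) 0 - χbar))
      = ε * g z * (∫ s in z..(z + ε), (χ₁ (s / ε) 0 - χbar))
        + ε * ∫ s in z..(z + ε), (g s - g z) * (χ₁ (s / ε) 0 - χbar) := by
    rw [← intervalIntegral.integral_const_mul, ← intervalIntegral.integral_const_mul,
      ← intervalIntegral.integral_add
        (Continuous.intervalIntegrable (by fun_prop : Continuous fun s : ℝ => ε * g z * (χ₁ (s / ε) 0 - χbar)) _ _)
        (Continuous.intervalIntegrable (by fun_prop : Continuous fun s : ℝ => ε * ((g s - g z) * (χ₁ (s / ε) 0 - χbar))) _ _)]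
    apply intervalIntegral.integral_congr
    intro s _
    ring
  rw [hsplit, hint0, mul_zero, zero_add]
  -- bound the remainder integral
  have hbnd : |∫ s in z..(z + ε), (g s - g z) * (χ₁ (s / ε) 0 - χbar)|
      ≤ ∫ s in z..(z + ε), C * (δ * (s - z) + δ / 2 * (s - z) ^ 2) := by
    have h1 : |∫ s in z..(z + ε), (g s - g z) * (χ₁ (s / ε) 0 - χbar)|
        ≤ ∫ s in z..(z + ε), |(g s - g z) * (χ₁ (s / ε) 0 - χbar)| :=
      intervalIntegral.abs_integral_le_integral_abs (by linarith)
    refine le_trans h1 ?_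
    apply intervalIntegral.integral_mono_on (by linarith)
      (Continuous.intervalIntegrable (by fun_prop : Continuous fun s : ℝ => |(g s - g z) * (χ₁ (s / ε) 0 - χbar)|) _ _)
      (Continuous.intervalIntegrable (by fun_prop : Continuous fun s : ℝ => C * (δ * (s - z) + δ / 2 * (s - z) ^ 2)) _ _)
    intro s hsm
    rw [abs_mul]
    have h2 := hgs s hsm
    have h3 := hχ (s / ε)
    calc |g s - g z| * |χ₁ (s / ε) 0 - χbar|
        ≤ (δ * (s - z) + δ / 2 * (s - z) ^ 2) * C := by
          apply mul_le_mul h2 h3 (abs_nonneg _)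
          nlinarith [hsm.1, sq_nonneg (s - z)]
      _ = C * (δ * (s - z) + δ / 2 * (s - z) ^ 2) := by ring
  -- compute the bounding integral
  have hcomp2 : (∫ s in z..(z + ε), C * (δ * (s - z) + δ / 2 * (s - z) ^ 2))
      = C * (δ * ε ^ 2 / 2 + δ / 6 * ε ^ 3) := by
    rw [intervalIntegral.integral_const_mul,
      intervalIntegral.integral_add
        (Continuous.intervalIntegrable (by fun_prop : Continuous fun s : ℝ => δ * (s - z)) _ _)
        (Continuous.intervalIntegrable (by fun_prop : Continuous fun s : ℝ => δ / 2 * (s - z) ^ 2) _ _),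
      intervalIntegral.integral_const_mul, intervalIntegral.integral_const_mul]
    have e1 : (∫ s in z..(z + ε), (s - z)) = ε ^ 2 / 2 := by
      rw [intervalIntegral.integral_comp_sub_right (fun u => u) z, integral_id]
      ring
    have e2 : (∫ s in z..(z + ε), (s - z) ^ 2) = ε ^ 3 / 3 := by
      rw [intervalIntegral.integral_comp_sub_right (fun u => u ^ 2) z, integral_pow]
      push_cast
      ring
    rw [e1, e2]
    ring
  -- put everything together
  have hfinal : |ε * ∫ s in z..(z + ε), (g s - g z) * (χ₁ (s / ε) 0 - χbar)|
      ≤ ε * (C * (δ * ε ^ 2 / 2 + δ / 6 * ε ^ 3)) := by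
    rw [abs_mul, abs_of_pos hε]
    exact mul_le_mul_of_nonneg_left (le_trans hbnd hcomp2.le) hε.le
  refine le_trans hfinal ?_
  have hr1 : ε ^ ((5:ℝ)/2) = ε ^ (-(1:ℝ)/2) * ε ^ (3:ℕ) := by
    rw [← Real.rpow_natCast ε 3, ← Real.rpow_add hε]; norm_num
  have hr2 : ε ^ ((7:ℝ)/2) = ε ^ (-(1:ℝ)/2) * ε ^ (4:ℕ) := by
    rw [← Real.rpow_natCast ε 4, ← Real.rpow_add hε]; norm_num
  rw [hr1, hr2, hδdef]
  ring_nf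
  nlinarith [sq_nonneg ε]
end

section
/- Under the assumptions: |∂²ū₁/(∂x₂∂x₁)(z,0)| ≤ K ε^{-1/2}, |∂³ū₁/(∂x₂∂x₁²)| ≤ K ε^{-1/2} on [z, z+ε] × {0}, χ₁ C¹ and 1-periodic in y₁ with height-independent horizontal average, and sup_{y₁∈[0,1]} |∂χ₁/∂y₂(y₁, 0)| ≤ C', the averaged wall-normal derivative of the corrector satisfies |∫_z^{z+ε} ε (∂ū₁/∂x₂)(s, 0) (1/ε) (∂χ₁/∂y₂)(s/ε, 0) ds| ≤ (C'K/2) ε^{3/2} + (C'K/6) ε^{5/2}; in particular it is O(ε^{3/2}). -/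
open MeasureTheory intervalIntegral Set

/-- Second HMM cancellation estimate: the averaged wall-normal derivative of
the corrector, `∫_z^{z+ε} ε g(s) (1/ε) (∂χ₁/∂y₂)(s/ε, 0) ds`, is
`O(ε^{3/2})` under Prandtl-scale bounds `|g'(z)|, |g''| ≤ K ε^{-1/2}` and
`sup_{y₁∈[0,1]} |∂χ₁/∂y₂(y₁,0)| ≤ C'`. -/
theorem stmt_7 (χ₁ : ℝ → ℝ → ℝ) (C' K : ℝ)
    (hC1 : ContDiff ℝ 1 (fun p : ℝ × ℝ => χ₁ p.1 p.2))
    (hper : ∀ y₁ y₂, χ₁ (y₁ + 1) y₂ = χ₁ y₁ y₂)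
    (havg : ∀ y₂, (∫ y₁ in (0:ℝ)..1, χ₁ y₁ y₂) = ∫ y₁ in (0:ℝ)..1, χ₁ y₁ 0)
    (hbound : ∀ y₁ ∈ Set.Icc (0:ℝ) 1, |deriv (fun t => χ₁ y₁ t) 0| ≤ C')
    (g : ℝ → ℝ) (z ε : ℝ) (hε : 0 < ε)
    (hg : ContDiff ℝ 2 g)
    (hg' : |deriv g z| ≤ K * ε ^ (-(1:ℝ)/2))
    (hg'' : ∀ s ∈ Set.Icc z (z + ε), |deriv (deriv g) s| ≤ K * ε ^ (-(1:ℝ)/2)) :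
    |∫ s in z..(z + ε), ε * g s * ((1/ε) * deriv (fun t => χ₁ (s / ε) t) 0)|
      ≤ C' * K / 2 * ε ^ ((3:ℝ)/2) + C' * K / 6 * ε ^ ((5:ℝ)/2) := by
  set Fm : ℝ × ℝ → ℝ := fun p => χ₁ p.1 p.2 with hFm
  have hdiffFm : Differentiable ℝ Fm := hC1.differentiable one_ne_zero
  set P : ℝ × ℝ → ℝ := fun p => fderiv ℝ Fm p (0, 1) with hP
  have hPcont : Continuous P := by
    exact (hC1.continuous_fderiv one_ne_zero).clm_apply continuous_const
  set φ : ℝ → ℝ := fun y => P (y, 0) with hφdef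
  have hφcont : Continuous φ := hPcont.comp (continuous_id.prodMk continuous_const)
  -- partial derivative facts
  have hD : ∀ y x : ℝ, HasDerivAt (fun t => χ₁ y t) (P (y, x)) x := by
    intro y x
    have h1 : HasDerivAt (fun t : ℝ => (y, t)) ((0:ℝ), (1:ℝ)) x :=
      (hasDerivAt_const x y).prodMk (hasDerivAt_id x)
    exact (hdiffFm (y, x)).hasFDerivAt.comp_hasDerivAt x h1
  have hderiv_eq : ∀ y : ℝ, deriv (fun t => χ₁ y t) 0 = φ y := fun y => (hD y 0).deriv
  -- periodicity of φ
  have hφper : Function.Periodic φ 1 := by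
    intro y
    have h1 : (fun t => χ₁ (y + 1) t) = fun t => χ₁ y t := funext fun t => hper y t
    rw [← hderiv_eq (y + 1), ← hderiv_eq y, h1]
  -- global bound on φ
  have hC'nonneg : 0 ≤ C' := le_trans (abs_nonneg _) (hbound 0 ⟨le_refl 0, zero_le_one⟩)
  have hφbound : ∀ y : ℝ, |φ y| ≤ C' := by
    intro y
    have h1 : φ (Int.fract y) = φ y := by
      have h := hφper.sub_zsmul_eq (x := y) ⌊y⌋
      rw [zsmul_eq_mul, mul_one, Int.self_sub_floor] at h
      exact h
    rw [← h1]
    have h2 : Int.fract y ∈ Set.Icc (0:ℝ) 1 :=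
      ⟨Int.fract_nonneg y, (Int.fract_lt_one y).le⟩
    calc |φ (Int.fract y)| = |deriv (fun t => χ₁ (Int.fract y) t) 0| := by
            rw [hderiv_eq]
      _ ≤ C' := hbound _ h2
  -- zero mean of φ on [0,1]
  have hφzero : (∫ y in (0:ℝ)..1, φ y) = 0 := by
    obtain ⟨C₀, hC₀⟩ : ∃ C₀, ∀ p ∈ Set.Icc (0:ℝ) 1 ×ˢ Set.Icc (-1:ℝ) 1, ‖P p‖ ≤ C₀ :=
      (isCompact_Icc.prod isCompact_Icc).exists_bound_of_continuousOn hPcont.continuousOn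
    have key := intervalIntegral.hasDerivAt_integral_of_dominated_loc_of_deriv_le
      (F := fun x t => χ₁ t x) (F' := fun x t => P (t, x)) (x₀ := (0:ℝ))
      (a := 0) (b := 1) (bound := fun _ => C₀) (μ := volume) (Metric.ball_mem_nhds (0:ℝ) one_pos)
      (Filter.Eventually.of_forall fun x =>
        ((hC1.continuous.comp (continuous_id.prodMk continuous_const)).aestronglyMeasurable))
      ((hC1.continuous.comp (continuous_id.prodMk continuous_const)).intervalIntegrable 0 1)
      ((hPcont.comp (continuous_id.prodMk continuous_const)).aestronglyMeasurable)
      (Filter.Eventually.of_forall fun t ht x hx => by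
        refine hC₀ (t, x) ⟨?_, ?_⟩
        · rw [Set.uIoc_of_le (zero_le_one)] at ht
          exact ⟨ht.1.le, ht.2⟩
        · have := mem_ball_iff_norm.mp hx
          simp only [sub_zero, Real.norm_eq_abs] at this
          constructor <;> [linarith [neg_abs_le x]; linarith [le_abs_self x]])
      (intervalIntegrable_const)
      (Filter.Eventually.of_forall fun t _ x _ => hD t x)
    have hconst : HasDerivAt (fun x : ℝ => ∫ t in (0:ℝ)..1, χ₁ t x) 0 0 := by
      have : (fun x : ℝ => ∫ t in (0:ℝ)..1, χ₁ t x)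
          = fun _ : ℝ => ∫ t in (0:ℝ)..1, χ₁ t 0 := funext fun x => havg x
      rw [this]; exact hasDerivAt_const 0 _
    have := key.2.unique hconst
    simpa [hφdef] using this
  -- the shifted scaled integral of φ vanishes
  have hφεzero : (∫ s in z..(z + ε), φ (s / ε)) = 0 := by
    rw [intervalIntegral.integral_comp_div (f := φ) hε.ne']
    have h1 : (z + ε) / ε = z / ε + 1 := by field_simp
    rw [h1, hφper.intervalIntegral_add_eq (z / ε) 0]
    simp [hφzero]
  -- rewrite the integrand
  have hintegrand : (fun s => ε * g s * ((1/ε) * deriv (fun t => χ₁ (s / ε) t) 0))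
      = fun s => g s * φ (s / ε) := by
    funext s
    rw [hderiv_eq]
    field_simp
  rw [hintegrand]
  set M : ℝ := K * ε ^ (-(1:ℝ)/2) with hM
  have hMnonneg : 0 ≤ M := le_trans (abs_nonneg _) hg'
  -- regularity of g
  have hgd : Differentiable ℝ g := hg.differentiable (by norm_num)
  have hg1 : ContDiff ℝ 1 (deriv g) := by
    have h := (contDiff_succ_iff_deriv (n := 1)).mp (hg.of_le (by norm_num))
    exact h.2.2
  have hg'd : Differentiable ℝ (deriv g) := hg1.differentiable one_ne_zero
  have hg''cont : Continuous (deriv (deriv g)) := hg1.continuous_deriv le_rfl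
  -- first order bound on deriv g on the interval
  have hstepA : ∀ u ∈ Set.Icc z (z + ε), |deriv g u| ≤ M + M * (u - z) := by
    intro u hu
    have hzu : z ≤ u := hu.1
    have hFTC : deriv g u - deriv g z = ∫ x in z..u, deriv (deriv g) x := by
      rw [intervalIntegral.integral_deriv_eq_sub (fun x _ => hg'd x)
        (hg''cont.intervalIntegrable z u)]
    have hb : ‖∫ x in z..u, deriv (deriv g) x‖ ≤ M * |u - z| := by
      apply intervalIntegral.norm_integral_le_of_norm_le_const
      intro x hx
      rw [Set.uIoc_of_le hzu] at hx
      exact hg'' x ⟨hx.1.le, le_trans hx.2 hu.2⟩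
    have : |deriv g u - deriv g z| ≤ M * (u - z) := by
      rw [abs_of_nonneg (by linarith : (0:ℝ) ≤ u - z)] at hb
      simpa [hFTC] using hb
    calc |deriv g u| ≤ |deriv g z| + |deriv g u - deriv g z| := by
          have := abs_sub_abs_le_abs_sub (deriv g u) (deriv g z)
          linarith [abs_sub_comm (deriv g u) (deriv g z) ▸ this]
      _ ≤ M + M * (u - z) := add_le_add hg' this
  -- second order bound on g
  have hstepB : ∀ s ∈ Set.Icc z (z + ε), |g s - g z| ≤ M * (s - z) + M * (s - z)^2 / 2 := by
    intro s hs
    have hzs : z ≤ s := hs.1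
    have hFTC : g s - g z = ∫ u in z..s, deriv g u := by
      rw [intervalIntegral.integral_deriv_eq_sub (fun x _ => hgd x)
        ((hg1.continuous).intervalIntegrable z s)]
    rw [hFTC, ← Real.norm_eq_abs]
    calc ‖∫ u in z..s, deriv g u‖ ≤ ∫ u in z..s, ‖deriv g u‖ :=
          intervalIntegral.norm_integral_le_integral_norm hzs
      _ ≤ ∫ u in z..s, (M + M * (u - z)) := by
          apply intervalIntegral.integral_mono_on hzs
          · exact ((hg1.continuous).norm.intervalIntegrable z s)
          · exact Continuous.intervalIntegrable (by fun_prop) z s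
          · intro u hu
            exact hstepA u ⟨hu.1, le_trans hu.2 hs.2⟩
      _ = M * (s - z) + M * (s - z)^2 / 2 := by
          have h1 : (∫ u in z..s, (u - z)) = (s - z)^2 / 2 := by
            rw [intervalIntegral.integral_comp_sub_right (fun u => u) z]
            simp [integral_id]
          have h2 : (∫ u in z..s, M * (u - z)) = M * ((s - z)^2 / 2) := by
            rw [intervalIntegral.integral_const_mul, h1]
          rw [intervalIntegral.integral_add (intervalIntegrable_const)
            (show IntervalIntegrable (fun u : ℝ => M * (u - z)) volume z s from
              Continuous.intervalIntegrable (by fun_prop) z s), h2,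
            intervalIntegral.integral_const]
          simp only [smul_eq_mul]
          ring
  -- split off the constant
  have hφsc : Continuous (fun s => φ (s / ε)) :=
    hφcont.comp (continuous_id.div_const ε)
  have hsplit : (∫ s in z..(z + ε), g s * φ (s / ε))
      = ∫ s in z..(z + ε), (g s - g z) * φ (s / ε) := by
    have h1 : IntervalIntegrable (fun s => g s * φ (s / ε)) volume z (z + ε) :=
      ((hg.continuous).mul hφsc).intervalIntegrable z (z + ε)
    have h2 : IntervalIntegrable (fun s => g z * φ (s / ε)) volume z (z + ε) :=
      (continuous_const.mul hφsc).intervalIntegrable z (z + ε)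
    have h3 : (∫ s in z..(z + ε), (g s - g z) * φ (s / ε))
        = (∫ s in z..(z + ε), g s * φ (s / ε)) - ∫ s in z..(z + ε), g z * φ (s / ε) := by
      rw [← intervalIntegral.integral_sub h1 h2]
      congr 1; funext s; ring
    rw [h3, intervalIntegral.integral_const_mul, hφεzero, mul_zero, sub_zero]
  rw [hsplit]
  have hzz : z ≤ z + ε := by linarith
  -- main estimate
  have hmain : |∫ s in z..(z + ε), (g s - g z) * φ (s / ε)|
      ≤ ∫ s in z..(z + ε), C' * (M * (s - z) + M * (s - z)^2 / 2) := by
    rw [← Real.norm_eq_abs]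
    calc ‖∫ s in z..(z + ε), (g s - g z) * φ (s / ε)‖
        ≤ ∫ s in z..(z + ε), ‖(g s - g z) * φ (s / ε)‖ :=
          intervalIntegral.norm_integral_le_integral_norm hzz
      _ ≤ ∫ s in z..(z + ε), C' * (M * (s - z) + M * (s - z)^2 / 2) := by
          apply intervalIntegral.integral_mono_on hzz
          · exact (((hg.continuous.sub continuous_const).mul hφsc).norm.intervalIntegrable _ _)
          · exact Continuous.intervalIntegrable (by fun_prop) _ _
          · intro s hs
            rw [Real.norm_eq_abs, abs_mul]
            calc |g s - g z| * |φ (s / ε)|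
                ≤ (M * (s - z) + M * (s - z)^2 / 2) * C' :=
                  mul_le_mul (hstepB s hs) (hφbound _) (abs_nonneg _)
                    (by nlinarith [hs.1, sq_nonneg (s - z)])
              _ = C' * (M * (s - z) + M * (s - z)^2 / 2) := by ring
  -- compute the bound integral
  have hcomp : (∫ s in z..(z + ε), C' * (M * (s - z) + M * (s - z)^2 / 2))
      = C' * M * (ε^2 / 2) + C' * M * (ε^3 / 6) := by
    rw [intervalIntegral.integral_const_mul]
    have h1 : (∫ s in z..(z + ε), (M * (s - z) + M * (s - z)^2 / 2))
        = ∫ u in (0:ℝ)..ε, (M * u + M * u^2 / 2) := by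
      have := intervalIntegral.integral_comp_sub_right
        (f := fun u => M * u + M * u^2 / 2) (a := z) (b := z + ε) z
      simpa using this
    rw [h1]
    rw [intervalIntegral.integral_add
      (show IntervalIntegrable (fun u : ℝ => M * u) volume 0 ε from
        Continuous.intervalIntegrable (by fun_prop) _ _)
      (show IntervalIntegrable (fun u : ℝ => M * u ^ 2 / 2) volume 0 ε from
        Continuous.intervalIntegrable (by fun_prop) _ _)]
    rw [intervalIntegral.integral_const_mul]
    have h2 : (∫ u in (0:ℝ)..ε, M * u ^ 2 / 2) = M / 2 * ∫ u in (0:ℝ)..ε, u ^ 2 := by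
      rw [← intervalIntegral.integral_const_mul]; congr 1; funext u; ring
    rw [h2, integral_id, integral_pow]
    ring
  -- rpow arithmetic
  have h2 : ε ^ (-(1:ℝ)/2) * ε ^ 2 = ε ^ ((3:ℝ)/2) := by
    rw [← Real.rpow_natCast ε 2, ← Real.rpow_add hε]
    norm_num
  have h3 : ε ^ (-(1:ℝ)/2) * ε ^ 3 = ε ^ ((5:ℝ)/2) := by
    rw [← Real.rpow_natCast ε 3, ← Real.rpow_add hε]
    norm_num
  have hfinal : C' * M * (ε^2 / 2) + C' * M * (ε^3 / 6)
      = C' * K / 2 * ε ^ ((3:ℝ)/2) + C' * K / 6 * ε ^ ((5:ℝ)/2) := by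
    rw [hM]
    calc C' * (K * ε ^ (-(1:ℝ)/2)) * (ε^2 / 2) + C' * (K * ε ^ (-(1:ℝ)/2)) * (ε^3 / 6)
        = C' * K / 2 * (ε ^ (-(1:ℝ)/2) * ε^2) + C' * K / 6 * (ε ^ (-(1:ℝ)/2) * ε^3) := by ring
      _ = C' * K / 2 * ε ^ ((3:ℝ)/2) + C' * K / 6 * ε ^ ((5:ℝ)/2) := by rw [h2, h3]
  calc |∫ s in z..(z + ε), (g s - g z) * φ (s / ε)|
      ≤ ∫ s in z..(z + ε), C' * (M * (s - z) + M * (s - z)^2 / 2) := hmain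
    _ = C' * K / 2 * ε ^ ((3:ℝ)/2) + C' * K / 6 * ε ^ ((5:ℝ)/2) := by rw [hcomp, hfinal]
end
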